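/- arXiv:2402.09232 — 2 statements merged into one kernel-verified Lean document; each statement's English description precedes it below -/
import Mathlib

section
/- If a string T' is obtained from a nonempty string T by deleting a single character (and T' is nonempty), then δ(T) ≤ δ(T') + 1; equivalently, δ can decrease by at most 1 after the deletion of one character. -/
/-- The number of distinct substrings of length `k` of `T`. -/
def substrCount {α : Type} [DecidableEq α] (T : List α) (k : ℕ) : ℕ :=
  ((Finset.range (T.length + 1 - k)).image (fun i => (T.drop i).take k)).card

/-- The substring complexity measure `δ(T) = max_{1 ≤ k ≤ |T|} T_k / k`,
where `T_k` is the number of distinct substrings of `T` of length `k`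
(defined as `0` for the empty string). -/
noncomputable def delta {α : Type} [DecidableEq α] (T : List α) : ℚ :=
  if h : 1 ≤ T.length then
    (Finset.Icc 1 T.length).sup' (Finset.nonempty_Icc.mpr h)
      (fun k => (substrCount T k : ℚ) / k)
  else 0

/-!
Deleting the character `x` from `T = u ++ x :: v` maps every length-`k` window of `T` lying
entirely in `u` or entirely in `v` to a window of `T' = u ++ v` with the same content. Only the
at most `k` windows covering `x` can be lost, so `T_k ≤ T'_k + k`; dividing by `k` and taking the
maximum gives `δ(T) ≤ δ(T') + 1`.
-/

namespace List

variable {α : Type}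

theorem take_drop_append_of_add_le_length {u w : List α} {i k : ℕ} (h : i + k ≤ u.length) :
    ((u ++ w).drop i).take k = (u.drop i).take k := by
  rw [drop_append_of_le_length (by omega), take_append_of_le_length (by simp; omega)]

theorem drop_succ_append_cons_of_length_le {u v : List α} {x : α} {i : ℕ} (h : u.length ≤ i) :
    (u ++ x :: v).drop (i + 1) = (u ++ v).drop i := by
  obtain ⟨j, rfl⟩ := Nat.exists_eq_add_of_le h
  rw [Nat.add_assoc, drop_length_add_append, drop_length_add_append, drop_succ_cons]

end List

section SubstringComplexity

variable {α : Type} [DecidableEq α]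

theorem substrCount_eq_zero_of_length_lt {T : List α} {k : ℕ} (h : T.length < k) :
    substrCount T k = 0 := by
  simp [substrCount, show T.length + 1 - k = 0 by omega]

theorem substrCount_append_cons_le (u v : List α) (x : α) (k : ℕ) :
    substrCount (u ++ x :: v) k ≤ substrCount (u ++ v) k + k := by
  set p := u.length
  set window : ℕ → List α := fun i => ((u ++ x :: v).drop i).take k
  set window' : ℕ → List α := fun i => ((u ++ v).drop i).take k
  have hp : p ≤ (u ++ v).length := by simp [p]
  have hlen : (u ++ x :: v).length = (u ++ v).length + 1 := by simp; omega
  have hcover : (Finset.range ((u ++ x :: v).length + 1 - k)).image window ⊆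
      (Finset.range ((u ++ v).length + 1 - k)).image window' ∪
        (Finset.Icc (p + 1 - k) p).image window := by
    rintro _ hs
    obtain ⟨i, hi, rfl⟩ := Finset.mem_image.mp hs
    rw [Finset.mem_range, hlen] at hi
    rcases le_or_gt (i + k) p with hin_u | hpast_u
    · refine Finset.mem_union_left _ (Finset.mem_image.mpr ⟨i, ?_, ?_⟩)
      · exact Finset.mem_range.mpr (by omega)
      · simp only [window, window', List.take_drop_append_of_add_le_length hin_u]
    rcases le_or_gt i p with hcross | hin_v
    · exact Finset.mem_union_right _
        (Finset.mem_image_of_mem _ (Finset.mem_Icc.mpr (by omega)))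
    · obtain ⟨j, rfl⟩ : ∃ j, i = j + 1 := ⟨i - 1, by omega⟩
      refine Finset.mem_union_left _ (Finset.mem_image.mpr ⟨j, ?_, ?_⟩)
      · exact Finset.mem_range.mpr (by omega)
      · have hj : p ≤ j := by omega
        simp only [window, window', List.drop_succ_append_cons_of_length_le hj]
  calc substrCount (u ++ x :: v) k
      ≤ substrCount (u ++ v) k + ((Finset.Icc (p + 1 - k) p).image window).card :=
        (Finset.card_le_card hcover).trans (Finset.card_union_le _ _)
    _ ≤ substrCount (u ++ v) k + k := by
        have := (Finset.card_image_le (s := Finset.Icc (p + 1 - k) p) (f := window))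
        rw [Nat.card_Icc] at this
        omega

theorem delta_nonneg (T : List α) : 0 ≤ delta T := by
  unfold delta
  split_ifs with h
  · exact Finset.le_sup'_of_le _ (Finset.mem_Icc.mpr ⟨le_rfl, h⟩) (by positivity)
  · exact le_rfl

theorem substrCount_div_le_delta (T : List α) (k : ℕ) :
    (substrCount T k : ℚ) / k ≤ delta T := by
  rcases Nat.eq_zero_or_pos k with rfl | hk
  · simpa using delta_nonneg T
  rcases le_or_gt k T.length with hkT | hTk
  · rw [delta, dif_pos (by omega)]
    exact Finset.le_sup' (fun k => (substrCount T k : ℚ) / k) (Finset.mem_Icc.mpr ⟨hk, hkT⟩)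
  · simpa [substrCount_eq_zero_of_length_lt hTk] using delta_nonneg T

theorem delta_le {T : List α} {c : ℚ} (hc : 0 ≤ c)
    (h : ∀ k, (substrCount T k : ℚ) / k ≤ c) : delta T ≤ c := by
  unfold delta
  split_ifs
  · exact Finset.sup'_le _ _ fun k _ => h k
  · exact hc

end SubstringComplexity

theorem delta_delete_char_general {α : Type} [DecidableEq α] (T T' : List α)
    (hdel : ∃ (u v : List α) (x : α), T = u ++ x :: v ∧ T' = u ++ v) :
    delta T ≤ delta T' + 1 := by
  obtain ⟨u, v, x, rfl, rfl⟩ := hdel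
  refine delta_le (by linarith [delta_nonneg (u ++ v)]) fun k => ?_
  calc (substrCount (u ++ x :: v) k : ℚ) / k
      ≤ (substrCount (u ++ v) k + k) / k := by
        gcongr
        exact_mod_cast substrCount_append_cons_le u v x k
    _ ≤ substrCount (u ++ v) k / k + 1 := by
        rw [add_div]
        gcongr
        exact div_self_le_one _
    _ ≤ delta (u ++ v) + 1 := by
        gcongr
        exact substrCount_div_le_delta _ _

/-- If `T'` is obtained from the nonempty string `T` by
deleting a single character, and `T'` is nonempty, then `δ(T) ≤ δ(T') + 1`:
`δ` can decrease by at most 1 after the deletion of one character. -/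
theorem delta_delete_char {α : Type} [DecidableEq α] (T T' : List α)
    (hdel : ∃ (u v : List α) (x : α), T = u ++ x :: v ∧ T' = u ++ v)
    (hT' : T' ≠ []) :
    delta T ≤ delta T' + 1 :=
  delta_delete_char_general T T' hdel
end

section
/- For every integer d ≥ 0, there exist constants C and c > 0 such that for all i ≥ 2: g_it(d)(F_i) ≥ c·log₂|F_i| while ℓ(F_i) ≤ C; that is, on the family of Fibonacci words, g_it(d) = Ω(log n) while the smallest L-system has size O(1). -/
/-- Rules of an iterated SLP over alphabet `α` with variables `Fin N`. -/
inductive ISLPRule (α : Type) (N : ℕ) : Type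
  | term (a : α)
  | pair (B C : Fin N)
  | iter (k1 k2 : ℕ) (Bs : List (Fin N × ℕ))

namespace ISLPRule

variable {α : Type} {N : ℕ}

/-- Variables occurring in the right-hand side of a rule. -/
def vars : ISLPRule α N → List (Fin N)
  | .term _ => []
  | .pair B C => [B, C]
  | .iter _ _ Bs => Bs.map Prod.fst

/-- The size of a rule: 1 for `A → a`, 2 for `A → BC`, `2 + 2t` for iteration rules. -/
def size : ISLPRule α N → ℕ
  | .term _ => 1
  | .pair _ _ => 2
  | .iter _ _ Bs => 2 + 2 * Bs.length

/-- Validity of a rule in a `d`-ISLP: in iteration rules, `k1, k2 ≥ 1`,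
`t ≥ 1` and all exponents `c_j` satisfy `c_j ≤ d`. -/
def Ok (d : ℕ) : ISLPRule α N → Prop
  | .term _ => True
  | .pair _ _ => True
  | .iter k1 k2 Bs => 1 ≤ k1 ∧ 1 ≤ k2 ∧ Bs ≠ [] ∧ ∀ p ∈ Bs, p.2 ≤ d

/-- A rule is an SLP rule if it is of the form `A → a` or `A → BC`. -/
def isSLP : ISLPRule α N → Prop
  | .term _ => True
  | .pair _ _ => True
  | .iter _ _ _ => False

end ISLPRule

/-- `w` repeated `k` times, i.e. `w^k`. -/
def repList {α : Type} (w : List α) (k : ℕ) : List α := (List.replicate k w).flatten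

/-- The list `k1, k1±1, …, k2` (increasing if `k1 ≤ k2`, decreasing if `k1 > k2`). -/
def rangeK (k1 k2 : ℕ) : List ℕ :=
  if k1 ≤ k2 then (List.range (k2 + 1 - k1)).map (k1 + ·)
  else (List.range (k1 + 1 - k2)).map (k1 - ·)

/-- Expansion of one block `w_1^{i^{c_1}} ⋯ w_t^{i^{c_t}}`, where
`ps = [(w_1, c_1), …, (w_t, c_t)]`. -/
def iterBlock {α : Type} (ps : List (List α × ℕ)) (i : ℕ) : List α :=
  (ps.map (fun p => repList p.1 (i ^ p.2))).flatten

/-- Expansion of `∏_{i=k1}^{k2} w_1^{i^{c_1}} ⋯ w_t^{i^{c_t}}`. -/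
def iterExpand {α : Type} (k1 k2 : ℕ) (ps : List (List α × ℕ)) : List α :=
  ((rangeK k1 k2).map (iterBlock ps)).flatten

/-- A `d`-ISLP: variables `Fin N`, exactly one valid rule per variable, a start
variable, and acyclicity (variables are topologically ordered: every variable
occurring in the rule of `A` is smaller than `A`). -/
structure ISLP (α : Type) (d : ℕ) : Type where
  N : ℕ
  rule : Fin N → ISLPRule α N
  start : Fin N
  ok : ∀ A, (rule A).Ok d
  acyclic : ∀ A, ∀ B ∈ (rule A).vars, B < A

namespace ISLP

/-- `Expands rule A w` holds iff the (unique) expansion of variable `A` is `w`. -/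
inductive Expands {α : Type} {N : ℕ} (rule : Fin N → ISLPRule α N) : Fin N → List α → Prop
  | term {A : Fin N} {a : α} : rule A = .term a → Expands rule A [a]
  | pair {A B C : Fin N} {u v : List α} : rule A = .pair B C →
      Expands rule B u → Expands rule C v → Expands rule A (u ++ v)
  | iter {A : Fin N} {k1 k2 : ℕ} {Bs : List (Fin N × ℕ)} {ps : List (List α × ℕ)} :
      rule A = .iter k1 k2 Bs →
      ps.map Prod.snd = Bs.map Prod.snd →
      (∀ q ∈ Bs.zip ps, Expands rule q.1.1 q.2.1) →
      Expands rule A (iterExpand k1 k2 ps)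

variable {α : Type} {d : ℕ}

/-- The ISLP `G` generates the string `T`. -/
def Generates (G : ISLP α d) (T : List α) : Prop := Expands G.rule G.start T

/-- The size of an ISLP: the sum of the sizes of its rules. -/
def size (G : ISLP α d) : ℕ := ∑ A : Fin G.N, (G.rule A).size

end ISLP

/-- `g_{it(d)}(T)`: the minimum size of a `d`-ISLP generating `T`. -/
noncomputable def gIt (α : Type) (d : ℕ) (T : List α) : ℕ :=
  sInf {g : ℕ | ∃ G : ISLP α d, G.Generates T ∧ G.size = g}

/-- An L-system (for compression): a finite alphabet `Fin m` of variables, a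
non-erasing morphism `phi`, a coding `tau`, a start variable, a depth and a
length. -/
structure LSystem (α : Type) : Type where
  m : ℕ
  phi : Fin m → List (Fin m)
  phiNE : ∀ v, phi v ≠ []
  tau : Fin m → α
  start : Fin m
  depth : ℕ
  len : ℕ

namespace LSystem

variable {α : Type}

/-- The word `φ^d(S)`. -/
def word (L : LSystem α) : List (Fin L.m) :=
  (fun w => w.flatMap L.phi)^[L.depth] [L.start]

/-- The L-system `L` generates `T` if `|φ^d(S)| ≥ n` and
`T = τ(φ^d(S))[1..n]`, the length-`n` prefix of the coded word. -/
def Generates (L : LSystem α) (T : List α) : Prop :=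
  L.len ≤ L.word.length ∧ T = (L.word.map L.tau).take L.len

/-- The size of an L-system: `Σ_{A ∈ V} |φ(A)|`. -/
def size (L : LSystem α) : ℕ := ∑ v : Fin L.m, (L.phi v).length

end LSystem

/-- `ℓ(T)`: the minimum size of an L-system generating `T`. -/
noncomputable def ell {α : Type} (T : List α) : ℕ :=
  sInf {s : ℕ | ∃ L : LSystem α, L.Generates T ∧ L.size = s}

/-- The Fibonacci words over `{a, b} = Bool` (with `a = false`, `b = true`):
`F_0 = a`, `F_1 = b`, `F_{i+2} = F_{i+1}·F_i`. -/
def fibWord : ℕ → List Bool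
  | 0 => [false]
  | 1 => [true]
  | n + 2 => fibWord (n + 1) ++ fibWord n

/-!
Write `a = false`, `b = true` and `φ : a ↦ b, b ↦ ba`, so that `F_{n+1} = φ(F_n)`. No factor of a
Fibonacci word has the form `u u u u'` with `u'` the prefix of `u` of length `|u| - 2`
(`nearFourthPower u`); in particular there are no fourth powers. Such a factor can be rotated to
start with `b` and trimmed by at most one letter so as to end just before a `b`; it is then the
image under `φ` of a factor `m m m m''` with `φ m = u` of the same shape, the slack of two letters
surviving because `φ` strictly lengthens every factor of length at least two. So the period
strictly decreases, down to `|u| = 1`, where `aaa` and `bbb` are not factors.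

In an ISLP generating a word without fourth powers every exponent `i ^ c_j` is at most 3, and so
is every `i` unless all `c_j` vanish, in which case the product is a power of a fixed word with
at most 3 factors. Hence each expansion is at most `4 ^ (2 · size of its rule)` times longer
than the expansions it uses, and `|F_i| ≤ 4 ^ (2 g)` for `g = g_it(d)(F_i)`. On the other hand
`F_i = φ^{i-1}(b)` is generated by the L-system of `φ` itself, of size 3.
-/

section PowerFree

variable {α : Type} {k : ℕ} {w : List α}

def PowerFree (k : ℕ) (w : List α) : Prop := ∀ u, u ≠ [] → ¬ repList u k <:+: w

lemma length_repList (u : List α) (j : ℕ) : (repList u j).length = j * u.length := by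
  simp [repList]

lemma repList_one (u : List α) : repList u 1 = u := by
  simp [repList]

lemma repList_prefix_repList (u : List α) {i j : ℕ} (h : i ≤ j) :
    repList u i <+: repList u j := by
  obtain ⟨j, rfl⟩ := Nat.exists_eq_add_of_le h
  simp only [repList, List.replicate_add, List.flatten_append]
  exact List.prefix_append _ _

lemma PowerFree.mono {v : List α} (hw : PowerFree k w) (h : v <:+: w) : PowerFree k v :=
  fun u hu hv => hw u hu (hv.trans h)

lemma PowerFree.lt_of_repList_infix (hw : PowerFree k w) {u : List α} (hu : u ≠ []) {j : ℕ}
    (h : repList u j <:+: w) : j < k := by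
  by_contra! hj
  exact hw u hu ((repList_prefix_repList u hj).isInfix.trans h)

lemma PowerFree.two_le (hw : PowerFree k w) (hne : w ≠ []) : 2 ≤ k :=
  hw.lt_of_repList_infix hne (j := 1) (by rw [repList_one])

def nearFourthPower (u : List α) : List α := u ++ u ++ u ++ u.take (u.length - 2)

lemma infix_nearFourthPower (u : List α) : u <:+: nearFourthPower u :=
  ⟨[], u ++ u ++ u.take (u.length - 2), by simp [nearFourthPower]⟩

lemma nearFourthPower_prefix_repList (u : List α) : nearFourthPower u <+: repList u 4 := by
  simp only [nearFourthPower, repList, List.replicate_succ, List.replicate_zero,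
    List.flatten_cons, List.flatten_nil, List.append_nil, List.append_assoc]
  exact (List.prefix_append_right_inj _).mpr ((List.prefix_append_right_inj _).mpr
    ((List.prefix_append_right_inj _).mpr (List.take_prefix _ _)))

end PowerFree

section Iteration

variable {α : Type}

lemma mem_rangeK_left (k1 k2 : ℕ) : k1 ∈ rangeK k1 k2 := by
  unfold rangeK
  split <;> exact List.mem_map.mpr ⟨0, List.mem_range.mpr (by omega), by simp⟩

lemma mem_rangeK_right (k1 k2 : ℕ) : k2 ∈ rangeK k1 k2 := by
  unfold rangeK
  split <;> rename_i h
  · exact List.mem_map.mpr ⟨k2 - k1, List.mem_range.mpr (by omega), by omega⟩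
  · exact List.mem_map.mpr ⟨k1 - k2, List.mem_range.mpr (by omega), by omega⟩

lemma length_rangeK_le_of_lt {k1 k2 k : ℕ} (h1 : k1 < k) (h2 : k2 < k) :
    (rangeK k1 k2).length ≤ k := by
  unfold rangeK
  split <;> simp <;> omega

lemma length_iterBlock (ps : List (List α × ℕ)) (i : ℕ) :
    (iterBlock ps i).length = (ps.map fun p => i ^ p.2 * p.1.length).sum := by
  simp [iterBlock, length_repList, Function.comp_def]

lemma length_iterExpand (k1 k2 : ℕ) (ps : List (List α × ℕ)) :
    (iterExpand k1 k2 ps).length = ((rangeK k1 k2).map fun i => (iterBlock ps i).length).sum := by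
  simp [iterExpand, Function.comp_def]

lemma repList_infix_iterExpand {k1 k2 i : ℕ} {ps : List (List α × ℕ)} {p : List α × ℕ}
    (hp : p ∈ ps) (hi : i ∈ rangeK k1 k2) : repList p.1 (i ^ p.2) <:+: iterExpand k1 k2 ps :=
  (List.infix_of_mem_flatten (List.mem_map_of_mem (f := fun p => repList p.1 (i ^ p.2)) hp)).trans
    (List.infix_of_mem_flatten (List.mem_map_of_mem (f := iterBlock ps) hi))

lemma infix_iterExpand {k1 k2 : ℕ} (hk1 : 1 ≤ k1) {ps : List (List α × ℕ)} {p : List α × ℕ}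
    (hp : p ∈ ps) : p.1 <:+: iterExpand k1 k2 ps := by
  have := repList_prefix_repList p.1 (Nat.one_le_pow p.2 k1 hk1)
  rw [repList_one] at this
  exact this.isInfix.trans (repList_infix_iterExpand hp (mem_rangeK_left k1 k2))

/-- If some exponent `c_j` is positive, the range of `i` is bounded since `i ≤ i ^ c_j < k`;
otherwise the expansion is a `|rangeK k1 k2|`-th power of a fixed word. -/
lemma PowerFree.length_rangeK_le {k k1 k2 : ℕ} {ps : List (List α × ℕ)}
    (hfree : PowerFree k (iterExpand k1 k2 ps)) (hps : ps ≠ []) (hne : ∀ p ∈ ps, p.1 ≠ []) :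
    (rangeK k1 k2).length ≤ k := by
  by_cases hc : ∃ p ∈ ps, p.2 ≠ 0
  · obtain ⟨p, hp, hc⟩ := hc
    have hlt : ∀ i ∈ rangeK k1 k2, i < k := fun i hi =>
      (Nat.le_self_pow hc i).trans_lt
        (hfree.lt_of_repList_infix (hne p hp) (repList_infix_iterExpand hp hi))
    exact length_rangeK_le_of_lt (hlt _ (mem_rangeK_left k1 k2))
      (hlt _ (mem_rangeK_right k1 k2))
  · push Not at hc
    have hblock : iterBlock ps = fun _ => (ps.map Prod.fst).flatten := funext fun i => by
      rw [iterBlock]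
      congr 1
      exact List.map_congr_left fun p hp => by rw [hc p hp, pow_zero, repList_one]
    have hpow : iterExpand k1 k2 ps = repList (ps.map Prod.fst).flatten (rangeK k1 k2).length := by
      rw [iterExpand, hblock, List.map_const', repList]
    obtain ⟨p, hp⟩ := List.exists_mem_of_ne_nil ps hps
    have hB : (ps.map Prod.fst).flatten ≠ [] := fun h =>
      hne p hp (List.flatten_eq_nil_iff.mp h _ (List.mem_map_of_mem hp))
    exact (hfree.lt_of_repList_infix hB (hpow ▸ List.infix_refl _)).le

theorem PowerFree.length_iterExpand_le {k k1 k2 P : ℕ} {ps : List (List α × ℕ)}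
    (hfree : PowerFree k (iterExpand k1 k2 ps)) (hne : ∀ p ∈ ps, p.1 ≠ [])
    (hP : ∀ p ∈ ps, p.1.length ≤ P) :
    (iterExpand k1 k2 ps).length ≤ k ^ 2 * ps.length * P := by
  rcases eq_or_ne ps [] with rfl | hps
  · have : ∀ i, iterBlock ([] : List (List α × ℕ)) i = [] := fun _ => rfl
    simp [iterExpand, Function.comp_def, this]
  have hblock : ∀ i ∈ rangeK k1 k2, (iterBlock ps i).length ≤ ps.length * (k * P) := by
    intro i hi
    rw [length_iterBlock]
    refine (List.sum_le_card_nsmul _ (k * P) ?_).trans (by simp)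
    simp only [List.mem_map]
    rintro _ ⟨p, hp, rfl⟩
    exact Nat.mul_le_mul
      (hfree.lt_of_repList_infix (hne p hp) (repList_infix_iterExpand hp hi)).le (hP p hp)
  calc (iterExpand k1 k2 ps).length ≤ (rangeK k1 k2).length * (ps.length * (k * P)) := by
        rw [length_iterExpand]
        refine (List.sum_le_card_nsmul _ (ps.length * (k * P)) ?_).trans (by simp)
        simp only [List.mem_map]
        rintro _ ⟨i, hi, rfl⟩
        exact hblock i hi
    _ ≤ k * (ps.length * (k * P)) := Nat.mul_le_mul_right _ (hfree.length_rangeK_le hps hne)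
    _ = k ^ 2 * ps.length * P := by ring

end Iteration

lemma exists_mem_zip_of_map_snd_eq {β γ δ : Type} {Bs : List (β × δ)} {ps : List (γ × δ)}
    (h : ps.map Prod.snd = Bs.map Prod.snd) {p : γ × δ} (hp : p ∈ ps) :
    ∃ B, (B, p) ∈ Bs.zip ps := by
  have hlen : ps.length ≤ Bs.length := by simpa using (congrArg List.length h).le
  rw [← List.map_snd_zip hlen] at hp
  obtain ⟨⟨B, _⟩, hq, rfl⟩ := List.mem_map.mp hp
  exact ⟨B, hq⟩

namespace ISLP

variable {α : Type} {d : ℕ} (G : ISLP α d)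

lemma expands_ne_nil {A : Fin G.N} {w : List α} (h : Expands G.rule A w) : w ≠ [] := by
  induction h with
  | term => simp
  | pair _ _ _ ihu => simp [ihu]
  | @iter A k1 k2 Bs ps hr hsnd _ ih =>
    have hok := G.ok A
    rw [hr] at hok
    obtain ⟨hk1, -, hBs, -⟩ := hok
    obtain ⟨p, hp⟩ := List.exists_mem_of_ne_nil ps (by rintro rfl; simp_all)
    obtain ⟨B, hq⟩ := exists_mem_zip_of_map_snd_eq hsnd hp
    exact fun h => ih _ hq (List.eq_nil_of_infix_nil (h ▸ infix_iterExpand hk1 hp))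

def sizeBelow (A : Fin G.N) : ℕ := ∑ B ∈ Finset.univ.filter (· < A), (G.rule B).size

lemma sizeBelow_add_le_of_lt {A B : Fin G.N} (h : B < A) :
    G.sizeBelow B + (G.rule B).size ≤ G.sizeBelow A := by
  calc G.sizeBelow B + (G.rule B).size
      = ∑ C ∈ insert B (Finset.univ.filter (· < B)), (G.rule C).size := by
        rw [Finset.sum_insert (by simp), add_comm, sizeBelow]
    _ ≤ G.sizeBelow A := Finset.sum_le_sum_of_subset fun C hC => by
        simp only [Finset.mem_insert, Finset.mem_filter, Finset.mem_univ, true_and] at hC ⊢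
        rcases hC with rfl | hC
        exacts [h, hC.trans h]

lemma sizeBelow_add_le_size (A : Fin G.N) : G.sizeBelow A + (G.rule A).size ≤ G.size := by
  calc G.sizeBelow A + (G.rule A).size
      = ∑ C ∈ insert A (Finset.univ.filter (· < A)), (G.rule C).size := by
        rw [Finset.sum_insert (by simp), add_comm, sizeBelow]
    _ ≤ G.size := Finset.sum_le_sum_of_subset (Finset.subset_univ _)

theorem length_le_of_expands {k : ℕ} {A : Fin G.N} {w : List α} (h : Expands G.rule A w)
    (hw : PowerFree k w) : w.length ≤ k ^ (2 * (G.sizeBelow A + (G.rule A).size)) := by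
  have hk := hw.two_le (G.expands_ne_nil h)
  revert hw
  induction h with
  | @term A a hr =>
    intro _
    simpa using Nat.one_le_pow _ _ (by omega)
  | @pair A B C u v hr _ _ ihu ihv =>
    intro hw
    have hB := G.sizeBelow_add_le_of_lt (G.acyclic A B (by simp [hr, ISLPRule.vars]))
    have hC := G.sizeBelow_add_le_of_lt (G.acyclic A C (by simp [hr, ISLPRule.vars]))
    have hu := (ihu (hw.mono (List.infix_append [] u v))).trans
      (Nat.pow_le_pow_right (by omega) (Nat.mul_le_mul_left 2 hB))
    have hv := (ihv (hw.mono (List.suffix_append u v).isInfix)).trans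
      (Nat.pow_le_pow_right (by omega) (Nat.mul_le_mul_left 2 hC))
    have hk4 : 2 ≤ k ^ 4 := le_trans hk (Nat.le_self_pow (by norm_num) k)
    rw [hr, ISLPRule.size, List.length_append, mul_add, pow_add]
    calc u.length + v.length ≤ k ^ (2 * G.sizeBelow A) * 2 := by omega
      _ ≤ k ^ (2 * G.sizeBelow A) * k ^ 4 := Nat.mul_le_mul_left _ hk4
  | @iter A k1 k2 Bs ps hr hsnd hexp ih =>
    intro hw
    have hok := G.ok A
    rw [hr] at hok
    obtain ⟨hk1, -, -, -⟩ := hok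
    have hps : ∀ p ∈ ps, p.1 ≠ [] ∧ p.1.length ≤ k ^ (2 * G.sizeBelow A) := by
      intro p hp
      obtain ⟨B, hq⟩ := exists_mem_zip_of_map_snd_eq hsnd hp
      have hBA : B.1 < A :=
        G.acyclic A B.1 (by rw [hr]; exact List.mem_map_of_mem (List.of_mem_zip hq).1)
      exact ⟨G.expands_ne_nil (hexp _ hq), (ih _ hq (hw.mono (infix_iterExpand hk1 hp))).trans
        (Nat.pow_le_pow_right (by omega) (Nat.mul_le_mul_left 2 (G.sizeBelow_add_le_of_lt hBA)))⟩
    have hlen : ps.length = Bs.length := by simpa using congrArg List.length hsnd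
    have ht : k ^ 2 * Bs.length ≤ k ^ (2 * (2 + 2 * Bs.length)) :=
      calc k ^ 2 * Bs.length ≤ k ^ 2 * k ^ Bs.length :=
            Nat.mul_le_mul_left _ (Nat.lt_pow_self (by omega)).le
        _ = k ^ (2 + Bs.length) := (pow_add _ _ _).symm
        _ ≤ _ := Nat.pow_le_pow_right (by omega) (by omega)
    rw [hr, ISLPRule.size, mul_add, pow_add]
    calc _ ≤ k ^ 2 * ps.length * k ^ (2 * G.sizeBelow A) :=
          hw.length_iterExpand_le (fun p hp => (hps p hp).1) (fun p hp => (hps p hp).2)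
      _ ≤ _ := by rw [hlen, mul_comm (k ^ (2 * G.sizeBelow A))]; exact Nat.mul_le_mul_right _ ht

theorem length_le_pow_size {k : ℕ} {T : List α} (hG : G.Generates T) (hT : PowerFree k T) :
    T.length ≤ k ^ (2 * G.size) :=
  (G.length_le_of_expands hG hT).trans <| Nat.pow_le_pow_right
    (by have := hT.two_le (G.expands_ne_nil hG); omega)
    (Nat.mul_le_mul_left 2 (G.sizeBelow_add_le_size _))

end ISLP

theorem length_le_pow_gIt {α : Type} {d k : ℕ} {T : List α} (hT : PowerFree k T)
    (hex : ∃ G : ISLP α d, G.Generates T) : T.length ≤ k ^ (2 * gIt α d T) := by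
  obtain ⟨G, hG⟩ := hex
  obtain ⟨G', hG', hsize⟩ := Nat.sInf_mem (⟨G.size, G, hG, rfl⟩ :
    {g : ℕ | ∃ G : ISLP α d, G.Generates T ∧ G.size = g}.Nonempty)
  rw [gIt, ← hsize]
  exact G'.length_le_pow_size hG' hT

namespace Fibonacci

def morphLetter : Bool → List Bool
  | true => [true, false]
  | false => [true]

def morph (w : List Bool) : List Bool := w.flatMap morphLetter

@[simp] lemma morph_nil : morph [] = [] := rfl

@[simp] lemma morph_cons (c : Bool) (w : List Bool) :
    morph (c :: w) = morphLetter c ++ morph w := rfl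

@[simp] lemma morph_append (v w : List Bool) : morph (v ++ w) = morph v ++ morph w := by
  simp [morph]

lemma length_morph (w : List Bool) : (morph w).length = w.length + w.count true := by
  induction w with
  | nil => rfl
  | cons c w ih => cases c <;> simp [morphLetter, ih] <;> omega

lemma head?_morph_ne_some_false (w : List Bool) : (morph w).head? ≠ some false := by
  cases w with
  | nil => simp
  | cons c w => cases c <;> simp [morphLetter]

/-- Greedy decoding: `true, false` comes from `true`, because no `morph w` starts with `false`. -/
def decode : List Bool → List Bool
  | true :: false :: w => true :: decode w
  | true :: w => false :: decode w
  | false :: w => decode w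
  | [] => []

lemma decode_morph (w : List Bool) : decode (morph w) = w := by
  induction w with
  | nil => rfl
  | cons c w ih =>
    cases c
    · have := head?_morph_ne_some_false w
      rcases hw : morph w with _ | ⟨_ | _, w'⟩ <;> simp_all [morphLetter, decode]
    · simp [morphLetter, decode, ih]

lemma morph_injective : Function.Injective morph :=
  Function.LeftInverse.injective decode_morph

lemma morph_eq_append {z x y : List Bool} (h : morph z = x ++ y) (hy : y.head? ≠ some false) :
    ∃ z₁ z₂, z = z₁ ++ z₂ ∧ morph z₁ = x ∧ morph z₂ = y := by
  induction z generalizing x with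
  | nil =>
    obtain ⟨rfl, rfl⟩ := List.append_eq_nil_iff.mp h.symm
    exact ⟨[], [], rfl, rfl, rfl⟩
  | cons c z ih =>
    rw [morph_cons, List.append_eq_append_iff] at h
    rcases h with ⟨x', rfl, hz⟩ | ⟨k, hc, rfl⟩
    · obtain ⟨z₁, z₂, rfl, h₁, h₂⟩ := ih hz
      exact ⟨c :: z₁, z₂, rfl, by simp [h₁], h₂⟩
    · rcases x with _ | ⟨x₀, x⟩
      · exact ⟨[], c :: z, rfl, rfl, by rw [morph_cons, hc, List.nil_append]⟩
      rcases k with _ | ⟨k₀, k⟩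
      · exact ⟨[c], z, rfl, by simpa using hc, by simp⟩
      cases c <;> cases x <;> simp [morphLetter] at hc
      simp [hc] at hy

lemma prefix_or_of_morph_prefix {s m : List Bool} (h : morph s <+: morph m) :
    s <+: m ∨ ∃ s₀ r, s = s₀ ++ [false] ∧ m = s₀ ++ true :: r := by
  induction s generalizing m with
  | nil => exact .inl List.nil_prefix
  | cons c s ih =>
    rcases m with _ | ⟨c', m⟩
    · cases c <;> simp [morphLetter] at h
    have hm := head?_morph_ne_some_false m
    have hs := head?_morph_ne_some_false s
    cases c <;> cases c' <;> simp only [morph_cons, morphLetter, List.cons_append, List.nil_append,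
      List.cons_prefix_cons, true_and] at h
    · rcases ih h with h' | ⟨s₀, r, rfl, rfl⟩
      · exact .inl (List.prefix_cons_inj _ |>.mpr h')
      · exact .inr ⟨false :: s₀, r, rfl, rfl⟩
    · right
      obtain rfl : s = [] := by
        rcases hms : morph s with _ | ⟨x, t⟩
        · exact morph_injective hms
        · rw [hms, List.cons_prefix_cons] at h
          simp [hms, h.1] at hs
      exact ⟨[], m, rfl, rfl⟩
    · obtain ⟨t, ht⟩ := h
      simp [← ht] at hm
    · rcases ih h with h' | ⟨s₀, r, rfl, rfl⟩
      · exact .inl (List.prefix_cons_inj _ |>.mpr h')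
      · exact .inr ⟨true :: s₀, r, rfl, rfl⟩

lemma not_false_false_infix_morph (w : List Bool) : ¬ [false, false] <:+: morph w := by
  induction w with
  | nil => simp
  | cons c w ih =>
    have hw := head?_morph_ne_some_false w
    cases c <;> simp_all [morphLetter, List.infix_cons_iff, List.singleton_prefix_iff_head?_eq_some]

lemma fibWord_succ (n : ℕ) : fibWord (n + 1) = morph (fibWord n) := by
  induction n using Nat.strong_induction_on with
  | _ n ih =>
    match n, ih with
    | 0, _ => rfl
    | 1, _ => rfl
    | k + 2, ih =>
      calc fibWord (k + 3) = fibWord (k + 2) ++ fibWord (k + 1) := rfl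
        _ = morph (fibWord (k + 1) ++ fibWord k) := by
          rw [morph_append, ih (k + 1) (by omega), ih k (by omega)]

lemma fibWord_ne_nil : ∀ n, fibWord n ≠ []
  | 0 | 1 => by simp [fibWord]
  | n + 2 => by simp [fibWord, fibWord_ne_nil (n + 1)]

def IsFactor (w : List Bool) : Prop := ∃ n, w <:+: fibWord n

lemma IsFactor.mono {v w : List Bool} (hw : IsFactor w) (h : v <:+: w) : IsFactor v :=
  let ⟨n, hn⟩ := hw; ⟨n, h.trans hn⟩

lemma not_isFactor_false_false : ¬ IsFactor [false, false] := by
  rintro ⟨_ | n, h⟩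
  · simpa [fibWord] using h.length_le
  · exact not_false_false_infix_morph _ (fibWord_succ n ▸ h)

/-- `F_n` sits inside `F_{n+3} = F_{n+1} F_n F_{n+1}`. -/
lemma IsFactor.extend {w : List Bool} (h : IsFactor w) : ∃ c d, IsFactor (c :: w ++ [d]) := by
  obtain ⟨n, l, r, hn⟩ := h
  obtain hL | ⟨L, c, hL⟩ := List.eq_nil_or_concat' (fibWord (n + 1) ++ l)
  · simp [fibWord_ne_nil] at hL
  rcases hR : r ++ fibWord (n + 1) with _ | ⟨d, R⟩
  · simp [fibWord_ne_nil] at hR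
  refine ⟨c, d, n + 3, L, R, ?_⟩
  calc L ++ (c :: w ++ [d]) ++ R = (fibWord (n + 1) ++ l) ++ w ++ (r ++ fibWord (n + 1)) := by
        rw [hL, hR]; simp
    _ = fibWord (n + 3) := by
        rw [show fibWord (n + 3) = fibWord (n + 1) ++ fibWord n ++ fibWord (n + 1) from rfl, ← hn]
        simp

lemma IsFactor.exists_append {w : List Bool} (h : IsFactor w) : ∃ d, IsFactor (w ++ [d]) :=
  let ⟨_, d, h⟩ := h.extend; ⟨d, h.mono (List.suffix_cons _ _).isInfix⟩

lemma IsFactor.getLast?_ne_some_false {x : List Bool} (h : IsFactor (x ++ [false])) :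
    x.getLast? ≠ some false := by
  rw [Ne, List.getLast?_eq_some_iff]
  rintro ⟨x', rfl⟩
  exact not_isFactor_false_false (h.mono ⟨x', [], by simp⟩)

lemma IsFactor.true_mem {w : List Bool} (h : IsFactor w) (hw : 2 ≤ w.length) : true ∈ w := by
  obtain ⟨a, b, w', rfl⟩ : ∃ a b w', w = a :: b :: w' := by
    rcases w with _ | ⟨a, _ | ⟨b, w'⟩⟩ <;> simp at hw ⊢
  cases a <;> cases b <;> simp
  exact (not_isFactor_false_false (h.mono ⟨[], w', rfl⟩)).elim

lemma IsFactor.length_lt_length_morph {w : List Bool} (h : IsFactor w) (hw : 2 ≤ w.length) :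
    w.length < (morph w).length := by
  rw [length_morph]
  have := List.count_pos_iff.mpr (h.true_mem hw)
  omega

lemma IsFactor.exists_morph_eq {y : List Bool} (h : IsFactor (y ++ [true]))
    (hy : y.head? ≠ some false) : ∃ z, morph z = y ∧ IsFactor z := by
  obtain ⟨_ | n, l, r, hn⟩ := h
  · have : true ∈ fibWord 0 := by simp [← hn]
    simp [fibWord] at this
  rw [fibWord_succ, List.append_assoc, List.append_assoc] at hn
  obtain ⟨v₁, v₂, hv, -, hv₂⟩ := morph_eq_append hn.symm (by cases y <;> simp_all)
  obtain ⟨z, z', rfl, hz, -⟩ := morph_eq_append hv₂ (by simp)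
  exact ⟨z, hz, n, v₁, z', by simp [hv]⟩

lemma IsFactor.append_false_true {x : List Bool} (h : IsFactor (x ++ [false])) :
    IsFactor (x ++ [false, true]) := by
  obtain ⟨_ | _, hd⟩ := h.exists_append
  · exact (not_isFactor_false_false (hd.mono ⟨x, [], by simp⟩)).elim
  · simpa using hd

lemma not_isFactor_true_true_true : ¬ IsFactor [true, true, true] := by
  intro h
  obtain ⟨_ | _, hd⟩ := h.exists_append
  · obtain ⟨z, hz, hf⟩ := hd.append_false_true.exists_morph_eq (y := [true, true, true, false])
      (by simp)
    obtain rfl : z = [false, false, true] := morph_injective (hz.trans rfl)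
    exact not_isFactor_false_false (hf.mono ⟨[], [true], rfl⟩)
  · obtain ⟨z, hz, hf⟩ := hd.exists_morph_eq (by simp)
    obtain rfl : z = [false, false, false] := morph_injective (hz.trans rfl)
    exact not_isFactor_false_false (hf.mono ⟨[], [false], rfl⟩)

/-- A slack of three letters in the image leaves a slack of at most two in the preimage: a
factor of length at least two contains a `true`, which `morph` doubles. -/
lemma exists_prefix_of_morph_prefix {s m : List Bool} (hm : IsFactor m)
    (h : morph s <+: morph m) (hlen : (morph m).length ≤ (morph s).length + 3) :
    ∃ s', s' <+: m ∧ s' <+: s ∧ m.length ≤ s'.length + 2 := by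
  rcases prefix_or_of_morph_prefix h with ⟨r, rfl⟩ | ⟨s₀, r, rfl, rfl⟩
  · refine ⟨s, List.prefix_append _ _, List.prefix_refl _, ?_⟩
    by_contra! hr
    have hr' : IsFactor r := hm.mono (List.suffix_append s r).isInfix
    have := hr'.length_lt_length_morph (by simp at hr; omega)
    simp at hlen hr
    omega
  · refine ⟨s₀, List.prefix_append _ _, List.prefix_append _ _, ?_⟩
    by_contra! hr
    have hr' : IsFactor r := hm.mono ⟨s₀ ++ [true], [], by simp⟩
    have := hr'.length_lt_length_morph (by simp at hr; omega)
    simp [morphLetter] at hlen hr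
    omega

/-- The occurrence of `nearFourthPower (false :: w)` is preceded by `true` and `w` ends with
`true`; shifting it one letter to the left gives period `true :: false :: w.dropLast`. -/
lemma IsFactor.exists_nearFourthPower_head_true {w : List Bool}
    (h : IsFactor (nearFourthPower (false :: w))) :
    ∃ u, u.length = w.length + 1 ∧ u.head? = some true ∧ IsFactor (nearFourthPower u) := by
  obtain ⟨c, _, hc⟩ := h.extend
  have hff : ∀ x, IsFactor x → ¬ [false, false] <:+: x := fun x hx h =>
    not_isFactor_false_false (hx.mono h)
  obtain rfl | ⟨w, b, rfl⟩ := List.eq_nil_or_concat' w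
  · exact (hff _ h ⟨[], [false], rfl⟩).elim
  obtain rfl : c = true := by
    cases c
    · exact (hff _ hc ⟨[], _, by simp [nearFourthPower]; rfl⟩).elim
    · rfl
  obtain rfl : b = true := by
    cases b
    · refine (hff _ h ?_).elim
      simp only [nearFourthPower, List.cons_append, List.append_assoc]
      exact List.infix_cons (List.infix_append' w [false, false] _)
    · rfl
  have key : true :: nearFourthPower (false :: (w ++ [true])) =
      (true :: false :: w) ++ (true :: false :: w) ++ (true :: false :: w) ++
        (true :: false :: w).take (w.length + 1) := by
    have : (false :: (w ++ [true])).take w.length = (false :: w).take w.length := by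
      rw [← List.cons_append, List.take_append_of_le_length (by simp)]
    simp [nearFourthPower, this]
  refine ⟨true :: false :: w, by simp, rfl, hc.mono ((List.IsPrefix.trans ?_
    (List.prefix_append _ _)).isInfix)⟩
  rw [key, nearFourthPower]
  exact (List.prefix_append_right_inj _).mpr (List.take_prefix_take_left (by simp))

/-- Trimming at most one letter, the occurrence ends right before a `true`, that is, at a
boundary between images of letters under `morph`. -/
lemma IsFactor.exists_aligned {u : List Bool} (h : IsFactor (nearFourthPower u))
    (hu : u.head? = some true) (hlen : 2 ≤ u.length) :
    ∃ s, s <+: u ∧ u.length ≤ s.length + 3 ∧ IsFactor (u ++ u ++ u ++ s ++ [true]) := by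
  obtain ⟨_ | _, hd⟩ := h.exists_append
  · have hlast := hd.getLast?_ne_some_false
    obtain ht | ⟨t, b, ht⟩ := List.eq_nil_or_concat' (u.take (u.length - 2))
    · obtain ⟨c, rfl⟩ : ∃ c, u = [true, c] := by
        rcases u with _ | ⟨a, _ | ⟨c, _ | ⟨e, u⟩⟩⟩ <;> simp_all
      cases c
      · simp [nearFourthPower] at hlast
      · exact (not_isFactor_true_true_true (h.mono ⟨[], [true, true, true], rfl⟩)).elim
    obtain rfl : b = true := by
      cases b
      · simp [nearFourthPower, ht] at hlast
      · rfl
    refine ⟨t, (List.prefix_append t [true]).trans (ht ▸ List.take_prefix _ _), ?_, ?_⟩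
    · have := congrArg List.length ht
      simp at this
      omega
    · simpa [nearFourthPower, ht] using h
  · exact ⟨u.take (u.length - 2), List.take_prefix _ _, by simp; omega, hd⟩

lemma IsFactor.exists_preimage_nearFourthPower {u : List Bool} (h : IsFactor (nearFourthPower u))
    (hu : u.head? = some true) (hlen : 2 ≤ u.length) :
    ∃ m, morph m = u ∧ IsFactor (nearFourthPower m) := by
  obtain ⟨s, hsu, hs, hf⟩ := h.exists_aligned hu hlen
  have hu' : ∀ y, (u ++ y).head? ≠ some false := by
    intro y
    rcases u with _ | ⟨_, _⟩ <;> simp_all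
  have hs0 : s.head? ≠ some false := by
    obtain ⟨r, rfl⟩ := hsu
    cases s <;> simp_all
  obtain ⟨z, hz, hzf⟩ := hf.exists_morph_eq (by simpa only [List.append_assoc] using hu' _)
  rw [List.append_assoc, List.append_assoc] at hz
  obtain ⟨m, z₁, rfl, rfl, hz₁⟩ := morph_eq_append hz (hu' _)
  obtain ⟨m₂, z₂, rfl, hm₂, hz₂⟩ := morph_eq_append hz₁ (hu' _)
  obtain ⟨m₃, s', rfl, hm₃, rfl⟩ := morph_eq_append hz₂ hs0
  obtain rfl : m = m₂ := (morph_injective hm₂).symm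
  obtain rfl : m = m₃ := (morph_injective hm₃).symm
  have hm : IsFactor m := hzf.mono (List.infix_append [] _ _)
  obtain ⟨s'', hs''m, hs''s', hlen''⟩ := exists_prefix_of_morph_prefix hm hsu hs
  refine ⟨m, rfl, hzf.mono (List.IsPrefix.isInfix ?_)⟩
  rw [nearFourthPower, List.append_assoc, List.append_assoc]
  refine (List.prefix_append_right_inj _).mpr ((List.prefix_append_right_inj _).mpr
    ((List.prefix_append_right_inj _).mpr ?_))
  exact (List.prefix_of_prefix_length_le (List.take_prefix _ m) hs''m
    ((List.length_take_le _ _).trans (by omega))).trans hs''s'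

lemma IsFactor.exists_shorter {u : List Bool} (h : IsFactor (nearFourthPower u))
    (hlen : 2 ≤ u.length) :
    ∃ m, m ≠ [] ∧ m.length < u.length ∧ IsFactor (nearFourthPower m) := by
  obtain ⟨u', hlen', hu', h'⟩ : ∃ u', u'.length = u.length ∧ u'.head? = some true ∧
      IsFactor (nearFourthPower u') := by
    rcases u with _ | ⟨_ | _, w⟩
    · simp at hlen
    · simpa using h.exists_nearFourthPower_head_true
    · exact ⟨_, rfl, rfl, h⟩
  obtain ⟨m, rfl, hm⟩ := h'.exists_preimage_nearFourthPower hu' (hlen' ▸ hlen)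
  refine ⟨m, ?_, ?_, hm⟩
  · rintro rfl
    simp at hlen'
    omega
  · rw [← hlen']
    by_cases hm2 : 2 ≤ m.length
    · exact (hm.mono (infix_nearFourthPower m)).length_lt_length_morph hm2
    · omega

theorem not_isFactor_nearFourthPower {u : List Bool} (hu : u ≠ []) :
    ¬ IsFactor (nearFourthPower u) := by
  induction hn : u.length using Nat.strong_induction_on generalizing u with
  | _ n ih =>
    intro h
    rcases Nat.lt_or_ge u.length 2 with hlt | hge
    · obtain ⟨c, rfl⟩ : ∃ c, u = [c] := by
        rcases u with _ | ⟨c, _ | _⟩ <;> simp_all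
        omega
      cases c
      · exact not_isFactor_false_false (h.mono ⟨[], [false], rfl⟩)
      · exact not_isFactor_true_true_true h
    · obtain ⟨m, hm, hlt, hmf⟩ := h.exists_shorter hge
      exact ih _ (hn ▸ hlt) hm rfl hmf

theorem powerFree_fibWord (n : ℕ) : PowerFree 4 (fibWord n) := by
  intro u hu h
  exact not_isFactor_nearFourthPower hu ⟨n, (nearFourthPower_prefix_repList u).isInfix.trans h⟩

end Fibonacci

namespace Fibonacci

def islpRule (i : ℕ) : Fin (i + 1) → ISLPRule Bool (i + 1)
  | ⟨0, _⟩ => .term false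
  | ⟨1, _⟩ => .term true
  | ⟨j + 2, h⟩ => .pair ⟨j + 1, by omega⟩ ⟨j, by omega⟩

def islp (d i : ℕ) : ISLP Bool d where
  N := i + 1
  rule := islpRule i
  start := Fin.last i
  ok := by rintro ⟨_ | _ | j, _⟩ <;> trivial
  acyclic := by
    rintro ⟨_ | _ | j, _⟩ B hB <;> simp [islpRule, ISLPRule.vars] at hB
    rcases hB with rfl | rfl <;> simp [Fin.lt_def]

lemma expands_islpRule (i : ℕ) :
    ∀ j (hj : j < i + 1), ISLP.Expands (islpRule i) ⟨j, hj⟩ (fibWord j)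
  | 0, _ => .term rfl
  | 1, _ => .term rfl
  | j + 2, hj => .pair rfl (expands_islpRule i (j + 1) (by omega)) (expands_islpRule i j (by omega))

lemma islp_generates (d i : ℕ) : (islp d i).Generates (fibWord i) :=
  expands_islpRule i i (by omega)

def phi (v : Fin 2) : List (Fin 2) := (morphLetter (finTwoEquiv v)).map finTwoEquiv.symm

lemma flatMap_phi (w : List Bool) :
    (w.map finTwoEquiv.symm).flatMap phi = (morph w).map finTwoEquiv.symm := by
  simp [phi, morph, List.flatMap_map, List.map_flatMap]

def lSystem (i : ℕ) : LSystem Bool where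
  m := 2
  phi := phi
  phiNE v := by cases h : finTwoEquiv v <;> simp [phi, morphLetter, h]
  tau := finTwoEquiv
  start := finTwoEquiv.symm true
  depth := i - 1
  len := (fibWord i).length

lemma iterate_flatMap_phi (n : ℕ) :
    (fun w => w.flatMap phi)^[n] [finTwoEquiv.symm true] =
      (fibWord (n + 1)).map finTwoEquiv.symm := by
  induction n with
  | zero => rfl
  | succ n ih => rw [Function.iterate_succ_apply', ih, flatMap_phi, fibWord_succ (n + 1)]

lemma lSystem_word {i : ℕ} (hi : 1 ≤ i) :
    (lSystem i).word = (fibWord i).map finTwoEquiv.symm := by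
  have := iterate_flatMap_phi (i - 1)
  rwa [Nat.sub_add_cancel hi] at this

lemma ell_fibWord_le {i : ℕ} (hi : 1 ≤ i) : ell (fibWord i) ≤ 3 := by
  refine Nat.sInf_le ⟨lSystem i, ⟨?_, ?_⟩, rfl⟩ <;> rw [lSystem_word hi]
  · simp [lSystem]
  · simp [lSystem, Function.comp_def]

end Fibonacci

/-- For every `d ≥ 0` there exist constants `C` and `c > 0`
such that for all `i ≥ 2`: `g_{it(d)}(F_i) ≥ c·log₂|F_i|` while `ℓ(F_i) ≤ C`;
on Fibonacci words, `g_{it(d)} = Ω(log n)` while `ℓ = O(1)`. -/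
theorem gIt_fibWord_vs_ell (d : ℕ) :
    ∃ (C : ℕ) (c : ℝ), 0 < c ∧ ∀ i : ℕ, 2 ≤ i →
      c * Real.logb 2 ((fibWord i).length) ≤ (gIt Bool d (fibWord i) : ℝ) ∧
      ell (fibWord i) ≤ C := by
  refine ⟨3, 1 / 4, by norm_num, fun i hi => ⟨?_, Fibonacci.ell_fibWord_le (by omega)⟩⟩
  set g := gIt Bool d (fibWord i)
  have hlen : (fibWord i).length ≤ 2 ^ (4 * g) := by
    have := length_le_pow_gIt (Fibonacci.powerFree_fibWord i) ⟨_, Fibonacci.islp_generates d i⟩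
    rwa [show (4 : ℕ) ^ (2 * g) = 2 ^ (4 * g) by rw [pow_mul, pow_mul]; norm_num] at this
  have hpos : (0 : ℝ) < (fibWord i).length := by
    exact_mod_cast List.length_pos_of_ne_nil (Fibonacci.fibWord_ne_nil i)
  have hlog := Real.logb_le_logb_of_le one_lt_two hpos
    (by exact_mod_cast hlen : ((fibWord i).length : ℝ) ≤ (2 : ℝ) ^ (4 * g))
  rw [Real.logb_pow, Real.logb_self_eq_one one_lt_two] at hlog
  push_cast at hlog
  linarith
end
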